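/- Fix α ∈ ℝ and σ > 0, and let q be a probability density on ℝ^D. Define the Gaussian-channel output density q̄(y) = ∫_{ℝ^D} q(x) (2πσ²)^{−D/2} exp(−‖y − αx‖²/(2σ²)) dx. Then q̄ is differentiable and for every y ∈ ℝ^D with q̄(y) > 0, ‖∇q̄(y)‖ / q̄(y) ≤ ( ∫_{ℝ^D} (‖y − αx‖² / σ⁴) · q(x) (2πσ²)^{−D/2} exp(−‖y − αx‖²/(2σ²)) dx / q̄(y) )^{1/2}; that is, the norm of the score of q̄ at y is bounded by the square root of the conditional second moment E[‖Y − αX‖²/σ⁴ | Y = y] under the joint law of X ~ q and Y = αX + σN with N standard Gaussian. -/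

import Mathlib

/-! Differentiating under the integral sign, which is legitimate because the Gaussian factor
and its gradient are bounded uniformly in `y`, gives `∇q̄(y) = ∫ q(x) k(y, x) (αx − y)/σ² dx`
for the channel kernel `k`. Hence `‖∇q̄(y)‖ ≤ ∫ (‖y − αx‖/σ²) q(x) k(y, x) dx`, and the
Cauchy–Schwarz inequality for the weight `q(x) k(y, x)`, whose total mass is `q̄(y)`, bounds
this by `√q̄(y) · (∫ (‖y − αx‖²/σ⁴) q(x) k(y, x) dx)^{1/2}`. -/

open MeasureTheory Real Filter Set
open scoped Topology RealInnerProductSpace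

noncomputable section

/-- Output density of the Gaussian channel `Y = αX + σN`, `N ~ N(0, I_D)`, with input
density `q` on `ℝ^D`: `q̄(y) = ∫ q(x) (2πσ²)^{−D/2} exp(−‖y − αx‖²/(2σ²)) dx`. -/
def channelOut {D : ℕ} (α σ : ℝ) (q : EuclideanSpace ℝ (Fin D) → ℝ)
    (y : EuclideanSpace ℝ (Fin D)) : ℝ :=
  ∫ x, q x * ((2 * π * σ ^ 2) ^ (-(D : ℝ) / 2) *
    Real.exp (-‖y - α • x‖ ^ 2 / (2 * σ ^ 2)))

theorem sq_mul_exp_neg_sq_div_le {σ : ℝ} (hσ : σ ≠ 0) (t : ℝ) :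
    t ^ 2 * exp (-t ^ 2 / (2 * σ ^ 2)) ≤ 2 * σ ^ 2 := by
  have h := (mul_exp_neg_le_exp_neg_one (t ^ 2 / (2 * σ ^ 2))).trans
    (exp_le_one_iff.mpr (by norm_num))
  rwa [← neg_div, div_mul_eq_mul_div, div_le_one (by positivity)] at h

theorem mul_exp_neg_sq_div_le {σ t : ℝ} (hσ : σ ≠ 0) (ht : 0 ≤ t) :
    t * exp (-t ^ 2 / (2 * σ ^ 2)) ≤ 1 + 2 * σ ^ 2 := by
  have hexp : exp (-t ^ 2 / (2 * σ ^ 2)) ≤ 1 :=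
    exp_le_one_iff.mpr (div_nonpos_of_nonpos_of_nonneg (by nlinarith) (by positivity))
  nlinarith [sq_mul_exp_neg_sq_div_le hσ t, exp_pos (-t ^ 2 / (2 * σ ^ 2))]

theorem integral_mul_le_sqrt_mul_sqrt {X : Type*} [MeasurableSpace X] {μ : Measure X}
    {f w : X → ℝ} (hf : ∀ x, 0 ≤ f x) (hw : ∀ x, 0 ≤ w x) (hwi : Integrable w μ)
    (hfwi : Integrable (fun x => f x ^ 2 * w x) μ) :
    ∫ x, f x * w x ∂μ ≤ √(∫ x, w x ∂μ) * √(∫ x, f x ^ 2 * w x ∂μ) := by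
  have hmem : ∀ {g : X → ℝ}, (∀ x, 0 ≤ g x) → Integrable g μ →
      MemLp (fun x => √(g x)) (ENNReal.ofReal 2) μ := by
    intro g hg hgi
    rw [ENNReal.ofReal_ofNat, memLp_two_iff_integrable_sq
      (continuous_sqrt.comp_aestronglyMeasurable hgi.aestronglyMeasurable)]
    exact hgi.congr (Eventually.of_forall fun x => (sq_sqrt (hg x)).symm)
  have hfw : ∀ x, 0 ≤ f x ^ 2 * w x := fun x => mul_nonneg (sq_nonneg _) (hw x)
  have h := integral_mul_le_Lp_mul_Lq_of_nonneg Real.HolderConjugate.two_two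
    (Eventually.of_forall fun x => sqrt_nonneg (w x))
    (Eventually.of_forall fun x => sqrt_nonneg (f x ^ 2 * w x)) (hmem hw hwi) (hmem hfw hfwi)
  simp only [rpow_two, sq_sqrt (hw _), sq_sqrt (hfw _), ← sqrt_eq_rpow] at h
  refine (integral_congr_ae (Eventually.of_forall fun x => ?_)).trans_le h
  rw [sqrt_mul (sq_nonneg _), sqrt_sq (hf x)]
  linear_combination -f x * mul_self_sqrt (hw x)

section GaussKernel

variable {E : Type*} [NormedAddCommGroup E] [InnerProductSpace ℝ E]

-- The channel's transition density, with the normalising constant left as a parameter `c`.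
def gaussKernel (α σ c : ℝ) (y x : E) : ℝ :=
  c * exp (-‖y - α • x‖ ^ 2 / (2 * σ ^ 2))

theorem hasFDerivAt_exp_neg_norm_sub_sq_div (σ : ℝ) (a y : E) :
    HasFDerivAt (fun z => exp (-‖z - a‖ ^ 2 / (2 * σ ^ 2)))
      ((exp (-‖y - a‖ ^ 2 / (2 * σ ^ 2)) / σ ^ 2) • innerSL ℝ (a - y)) y := by
  have h := (HasFDerivAt.mul_const ((hasFDerivAt_id y).sub_const a).norm_sq.neg
    (2 * σ ^ 2)⁻¹).exp
  convert h using 1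
  · funext z
    simp only [Pi.neg_apply, id, div_eq_mul_inv, neg_mul]
  · ext v
    simp only [smul_apply, neg_apply, ContinuousLinearMap.comp_apply,
      ContinuousLinearMap.id_apply, innerSL_apply_apply, id, ← neg_sub y a, inner_neg_left,
      Pi.neg_apply, smul_eq_mul, nsmul_eq_mul]
    rcases eq_or_ne σ 0 with rfl | hσ
    · simp
    · field_simp
      ring

theorem hasFDerivAt_gaussKernel (α σ c : ℝ) (x y : E) :
    HasFDerivAt (gaussKernel α σ c · x)
      ((gaussKernel α σ c y x / σ ^ 2) • innerSL ℝ (α • x - y)) y :=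
  ((hasFDerivAt_exp_neg_norm_sub_sq_div σ (α • x) y).const_mul c).congr_fderiv
    (by rw [smul_smul, gaussKernel, mul_div_assoc])

theorem gaussKernel_nonneg {α σ c : ℝ} (hc : 0 ≤ c) (y x : E) : 0 ≤ gaussKernel α σ c y x :=
  mul_nonneg hc (exp_nonneg _)

theorem continuous_gaussKernel (α σ c : ℝ) (y : E) : Continuous (gaussKernel α σ c y) := by
  unfold gaussKernel
  fun_prop

theorem abs_gaussKernel_le {α σ c : ℝ} (y x : E) : |gaussKernel α σ c y x| ≤ |c| := by
  rw [gaussKernel, abs_mul, abs_of_pos (exp_pos _)]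
  exact mul_le_of_le_one_right (abs_nonneg c)
    (exp_le_one_iff.mpr (div_nonpos_of_nonpos_of_nonneg (by simp) (by positivity)))

theorem norm_sub_mul_abs_gaussKernel_le {α σ c : ℝ} (hσ : σ ≠ 0) (y x : E) :
    ‖y - α • x‖ * |gaussKernel α σ c y x| ≤ |c| * (1 + 2 * σ ^ 2) := by
  rw [gaussKernel, abs_mul, abs_of_pos (exp_pos _), mul_left_comm]
  exact mul_le_mul_of_nonneg_left (mul_exp_neg_sq_div_le hσ (norm_nonneg _)) (abs_nonneg c)

theorem norm_sub_sq_mul_abs_gaussKernel_le {α σ c : ℝ} (hσ : σ ≠ 0) (y x : E) :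
    ‖y - α • x‖ ^ 2 * |gaussKernel α σ c y x| ≤ |c| * (2 * σ ^ 2) := by
  rw [gaussKernel, abs_mul, abs_of_pos (exp_pos _), mul_left_comm]
  exact mul_le_mul_of_nonneg_left (sq_mul_exp_neg_sq_div_le hσ _) (abs_nonneg c)

end GaussKernel

section GaussianMixture

variable {E : Type*} [NormedAddCommGroup E] [InnerProductSpace ℝ E] [MeasurableSpace E]
  [OpensMeasurableSpace E] {μ : Measure E} {α σ c : ℝ} {p : E → ℝ}

theorem integrable_mul_gaussKernel (hp : Integrable p μ) (y : E) :
    Integrable (fun x => p x * gaussKernel α σ c y x) μ :=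
  hp.mul_bdd (continuous_gaussKernel α σ c y).aestronglyMeasurable
    (ae_of_all _ fun x => abs_gaussKernel_le y x)

theorem integrable_norm_sub_sq_div_mul_gaussKernel (hσ : σ ≠ 0) (hp : Integrable p μ) (y : E) :
    Integrable (fun x => ‖y - α • x‖ ^ 2 / σ ^ 4 * (p x * gaussKernel α σ c y x)) μ := by
  have hmeas :
      AEStronglyMeasurable (fun x => ‖y - α • x‖ ^ 2 / σ ^ 4 * gaussKernel α σ c y x) μ :=
    (by unfold gaussKernel; fun_prop : Continuous _).aestronglyMeasurable
  have hbound : ∀ x, ‖‖y - α • x‖ ^ 2 / σ ^ 4 * gaussKernel α σ c y x‖ ≤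
      |c| * (2 * σ ^ 2) / σ ^ 4 := fun x => by
    rw [Real.norm_eq_abs, abs_mul, abs_div, abs_of_nonneg (by positivity : (0 : ℝ) ≤ σ ^ 4),
      abs_of_nonneg (sq_nonneg _), div_mul_eq_mul_div]
    exact div_le_div_of_nonneg_right (norm_sub_sq_mul_abs_gaussKernel_le hσ y x) (by positivity)
  exact (hp.bdd_mul hmeas (ae_of_all _ hbound)).congr (ae_of_all _ fun x => by ring)

variable [SecondCountableTopology E]

theorem hasFDerivAt_integral_mul_gaussKernel (hσ : σ ≠ 0) (hp : Integrable p μ) (y : E) :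
    HasFDerivAt (fun z => ∫ x, p x * gaussKernel α σ c z x ∂μ)
      (∫ x, p x • ((gaussKernel α σ c y x / σ ^ 2) • innerSL ℝ (α • x - y)) ∂μ) y := by
  have hbound : ∀ x z, ‖p x • ((gaussKernel α σ c z x / σ ^ 2) • innerSL ℝ (α • x - z))‖ ≤
      |p x| * (|c| * (1 + 2 * σ ^ 2) / σ ^ 2) := fun x z => by
    rw [norm_smul, norm_smul, innerSL_apply_norm, Real.norm_eq_abs, Real.norm_eq_abs, abs_div,
      abs_of_pos (by positivity : (0 : ℝ) < σ ^ 2), norm_sub_rev, div_mul_eq_mul_div,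
      mul_comm _ ‖_‖]
    exact mul_le_mul_of_nonneg_left
      (div_le_div_of_nonneg_right (norm_sub_mul_abs_gaussKernel_le hσ z x) (sq_nonneg σ))
      (abs_nonneg _)
  refine hasFDerivAt_integral_of_dominated_of_fderiv_le univ_mem
    (Eventually.of_forall fun z => (integrable_mul_gaussKernel hp z).aestronglyMeasurable)
    (integrable_mul_gaussKernel hp y) ?_ (ae_of_all _ fun x z _ => hbound x z)
    (hp.abs.mul_const _)
    (ae_of_all _ fun x z _ => (hasFDerivAt_gaussKernel α σ c x z).const_mul (p x))
  exact hp.aestronglyMeasurable.smul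
    (((continuous_gaussKernel α σ c y).div_const _).aestronglyMeasurable.smul
      ((innerSL ℝ).continuous.comp_aestronglyMeasurable
        (by fun_prop : Continuous fun x : E => α • x - y).aestronglyMeasurable))

theorem norm_gradient_integral_mul_gaussKernel_le [CompleteSpace E] (hσ : σ ≠ 0)
    (hp0 : ∀ x, 0 ≤ p x) (hp : Integrable p μ) (hc : 0 ≤ c) (y : E) :
    ‖gradient (fun z => ∫ x, p x * gaussKernel α σ c z x ∂μ) y‖ ≤
      ∫ x, ‖y - α • x‖ / σ ^ 2 * (p x * gaussKernel α σ c y x) ∂μ := by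
  rw [(hasFDerivAt_integral_mul_gaussKernel hσ hp y).hasGradientAt.gradient,
    LinearIsometryEquiv.norm_map]
  refine (norm_integral_le_integral_norm _).trans_eq
    (integral_congr_ae (ae_of_all _ fun x => ?_))
  dsimp only
  rw [norm_smul, norm_smul, innerSL_apply_norm, Real.norm_of_nonneg (hp0 x),
    Real.norm_of_nonneg (div_nonneg (gaussKernel_nonneg hc y x) (sq_nonneg σ)), norm_sub_rev]
  ring

end GaussianMixture

theorem score_norm_le_conditional_moment_general
    (D : ℕ) (α σ : ℝ) (hσ : 0 < σ)
    (q : EuclideanSpace ℝ (Fin D) → ℝ)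
    (hq0 : ∀ x, 0 ≤ q x) (hqi : Integrable q) :
    Differentiable ℝ (channelOut α σ q) ∧
    ∀ y : EuclideanSpace ℝ (Fin D), 0 < channelOut α σ q y →
      ‖gradient (channelOut α σ q) y‖ / channelOut α σ q y ≤
        Real.sqrt ((∫ x, (‖y - α • x‖ ^ 2 / σ ^ 4) *
            (q x * ((2 * π * σ ^ 2) ^ (-(D : ℝ) / 2) *
              Real.exp (-‖y - α • x‖ ^ 2 / (2 * σ ^ 2)))))
          / channelOut α σ q y) := by
  set c := (2 * π * σ ^ 2) ^ (-(D : ℝ) / 2)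
  have hc : 0 ≤ c := by positivity
  have hout : channelOut α σ q = fun y => ∫ x, q x * gaussKernel α σ c y x := rfl
  refine ⟨fun y => (hout ▸ hasFDerivAt_integral_mul_gaussKernel hσ.ne' hqi y).differentiableAt,
    fun y hQ => ?_⟩
  have hsq : ∀ x, (‖y - α • x‖ / σ ^ 2) ^ 2 = ‖y - α • x‖ ^ 2 / σ ^ 4 := fun x => by ring
  have hCS := integral_mul_le_sqrt_mul_sqrt (μ := volume)
    (fun x => div_nonneg (norm_nonneg (y - α • x)) (sq_nonneg σ))
    (fun x => mul_nonneg (hq0 x) (gaussKernel_nonneg hc y x)) (integrable_mul_gaussKernel hqi y)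
    (by simpa only [hsq] using integrable_norm_sub_sq_div_mul_gaussKernel hσ.ne' hqi y)
  simp only [hsq] at hCS
  calc ‖gradient (channelOut α σ q) y‖ / channelOut α σ q y
      ≤ (∫ x, ‖y - α • x‖ / σ ^ 2 * (q x * gaussKernel α σ c y x)) / channelOut α σ q y := by
        gcongr
        exact hout ▸ norm_gradient_integral_mul_gaussKernel_le hσ.ne' hq0 hqi hc y
    _ ≤ √(channelOut α σ q y) * √(∫ x, ‖y - α • x‖ ^ 2 / σ ^ 4 * (q x * gaussKernel α σ c y x))
          / channelOut α σ q y := by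
        gcongr
        exact hCS
    _ = _ := by
      rw [mul_comm, mul_div_assoc, sqrt_div_self', ← div_eq_mul_one_div, ← sqrt_div' _ hQ.le]
      rfl

/-- the Gaussian-channel output density `q̄` is differentiable and the norm
of its score is bounded by the square root of the conditional second moment
`E[‖Y − αX‖²/σ⁴ | Y = y]`. -/
theorem score_norm_le_conditional_moment
    (D : ℕ) (α σ : ℝ) (hσ : 0 < σ)
    (q : EuclideanSpace ℝ (Fin D) → ℝ)
    (hq0 : ∀ x, 0 ≤ q x) (hq1 : ∫ x, q x = 1) (hqi : Integrable q) :
    Differentiable ℝ (channelOut α σ q) ∧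
    ∀ y : EuclideanSpace ℝ (Fin D), 0 < channelOut α σ q y →
      ‖gradient (channelOut α σ q) y‖ / channelOut α σ q y ≤
        Real.sqrt ((∫ x, (‖y - α • x‖ ^ 2 / σ ^ 4) *
            (q x * ((2 * π * σ ^ 2) ^ (-(D : ℝ) / 2) *
              Real.exp (-‖y - α • x‖ ^ 2 / (2 * σ ^ 2)))))
          / channelOut α σ q y) :=
  score_norm_le_conditional_moment_general D α σ hσ q hq0 hqi
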